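/- arXiv:1409.1153 — 2 statements merged into one kernel-verified Lean document; each statement's English description precedes it below -/
import Mathlib

section
/- Let φ₂(s,t) = (s + t², sin s - t sin s + t² cos s, cos s - t cos s - t² sin s). Then φ₂(s,0) = (s, sin s, cos s) and ⟨∂N/∂s(s, 0), ℓ(s)⟩ = 0 for all s, where N = ∂φ₂/∂s × ∂φ₂/∂t is the Lorentzian normal, ℓ(s) = (1, cos s, -sin s), and ⟨v,w⟩ = -v₁w₁ + v₂w₂ + v₃w₃. -/
noncomputable section

def lz (v w : ℝ × ℝ × ℝ) : ℝ := -(v.1 * w.1) + v.2.1 * w.2.1 + v.2.2 * w.2.2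

def cx (a b : ℝ × ℝ × ℝ) : ℝ × ℝ × ℝ :=
  (a.2.2 * b.2.1 - a.2.1 * b.2.2, a.2.2 * b.1 - a.1 * b.2.2, a.1 * b.2.1 - a.2.1 * b.1)

def ell (s : ℝ) : ℝ × ℝ × ℝ := (1, Real.cos s, -Real.sin s)

def phi2 (s t : ℝ) : ℝ × ℝ × ℝ :=
  (s + t ^ 2, Real.sin s - t * Real.sin s + t ^ 2 * Real.cos s,
    Real.cos s - t * Real.cos s - t ^ 2 * Real.sin s)

def Nphi2 (s t : ℝ) : ℝ × ℝ × ℝ :=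
  cx (deriv (fun s' => phi2 s' t) s) (deriv (fun t' => phi2 s t') t)

lemma derivS (s : ℝ) :
    deriv (fun s' => phi2 s' 0) s = (1, Real.cos s, -Real.sin s) := by
  have h : (fun s' => phi2 s' 0) = fun s' : ℝ => (s', Real.sin s', Real.cos s') := by
    funext s'; simp [phi2]
  rw [h]
  exact ((hasDerivAt_id s).prodMk
    ((Real.hasDerivAt_sin s).prodMk (Real.hasDerivAt_cos s))).deriv

lemma derivT (s : ℝ) :
    deriv (fun t' => phi2 s t') 0 = (0, -Real.sin s, -Real.cos s) := by
  have h1 : HasDerivAt (fun t' : ℝ => s + t' ^ 2) 0 0 := by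
    simpa using (hasDerivAt_const (0:ℝ) s).fun_add (hasDerivAt_pow 2 (0:ℝ))
  have h2 : HasDerivAt
      (fun t' : ℝ => Real.sin s - t' * Real.sin s + t' ^ 2 * Real.cos s)
      (-Real.sin s) 0 := by
    have := ((hasDerivAt_const (0:ℝ) (Real.sin s)).fun_sub
      ((hasDerivAt_id (0:ℝ)).mul_const (Real.sin s))).fun_add
      ((hasDerivAt_pow 2 (0:ℝ)).mul_const (Real.cos s))
    simpa using this
  have h3 : HasDerivAt
      (fun t' : ℝ => Real.cos s - t' * Real.cos s - t' ^ 2 * Real.sin s)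
      (-Real.cos s) 0 := by
    have := ((hasDerivAt_const (0:ℝ) (Real.cos s)).fun_sub
      ((hasDerivAt_id (0:ℝ)).mul_const (Real.cos s))).fun_sub
      ((hasDerivAt_pow 2 (0:ℝ)).mul_const (Real.sin s))
    simpa using this
  exact (h1.prodMk (h2.prodMk h3)).deriv

lemma N0 (s : ℝ) : Nphi2 s 0 = (1, Real.cos s, -Real.sin s) := by
  rw [Nphi2, derivS, derivT]
  simp [cx]
  nlinarith [Real.sin_sq_add_cos_sq s]

/-- φ₂ contains α as the parameter curve t = 0, and α is asymptotic on φ₂. -/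
theorem alpha_asymptotic_on_phi2 :
    (∀ s : ℝ, phi2 s 0 = (s, Real.sin s, Real.cos s)) ∧
    ∀ s : ℝ, lz (deriv (fun s' => Nphi2 s' 0) s) (ell s) = 0 := by
  constructor
  · intro s; simp [phi2]
  · intro s
    have h : (fun s' => Nphi2 s' 0)
        = fun s' : ℝ => (1, Real.cos s', -Real.sin s') := by
      funext s'; exact N0 s'
    rw [h]
    have hd : HasDerivAt (fun s' : ℝ => ((1:ℝ), Real.cos s', -Real.sin s'))
        (0, -Real.sin s, -Real.cos s) s := by
      exact (hasDerivAt_const s (1:ℝ)).prodMk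
        ((Real.hasDerivAt_cos s).prodMk (Real.hasDerivAt_sin s).fun_neg)
    rw [hd.deriv]
    simp [lz, ell]; ring
end
end

section
/- Under the hypotheses of the surface family construction (null curve α with Cartan frame, k₁ ≠ 0, marching-scale functions vanishing at t₀ along with their s-derivatives at t₀, i.e., x(s,t₀)=y(s,t₀)=z(s,t₀)=0 for all s), the asymptotic condition ⟨∂N/∂s(s,t₀), ℓ(s)⟩ = 0 for all s holds if and only if ∂y/∂t(s,t₀) = 0 for all s, assuming additionally that (∂/∂s)(φ₂(s,t₀)) = 0 where φ₂(s,t₀) = ∂z/∂s(s,t₀)·∂y/∂t(s,t₀) - ∂y/∂s(s,t₀)·∂z/∂t(s,t₀) vanishes identically since y(s,t₀) ≡ 0. -/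
noncomputable section

lemma hasDerivAt_fst' {E F : Type*} [NormedAddCommGroup E] [NormedSpace ℝ E]
    [NormedAddCommGroup F] [NormedSpace ℝ F] {f : ℝ → E × F} {d : E × F} {s : ℝ}
    (h : HasDerivAt f d s) : HasDerivAt (fun x => (f x).1) d.1 s := by
  simpa using (h.hasFDerivAt.fst).hasDerivAt

lemma hasDerivAt_snd' {E F : Type*} [NormedAddCommGroup E] [NormedSpace ℝ E]
    [NormedAddCommGroup F] [NormedSpace ℝ F] {f : ℝ → E × F} {d : E × F} {s : ℝ}
    (h : HasDerivAt f d s) : HasDerivAt (fun x => (f x).2) d.2 s := by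
  simpa using (h.hasFDerivAt.snd).hasDerivAt

lemma cx_expand (a b c : ℝ × ℝ × ℝ) (p q r : ℝ) :
    cx a (p • a + q • b + r • c) = q • cx a b + r • cx a c := by
  refine Prod.ext ?_ (Prod.ext ?_ ?_) <;>
    simp [cx, Prod.smul_fst, Prod.smul_snd, smul_eq_mul] <;> ring

lemma lz_smul_add (a b c : ℝ × ℝ × ℝ) (p q : ℝ) :
    lz (p • a + q • b) c = p * lz a c + q * lz b c := by
  simp [lz, Prod.smul_fst, Prod.smul_snd, smul_eq_mul]; ring

lemma lz_smul_right (a b : ℝ × ℝ × ℝ) (p : ℝ) :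
    lz a (p • b) = p * lz a b := by
  simp [lz, Prod.smul_fst, Prod.smul_snd, smul_eq_mul]; ring

/-- The asymptotic condition ⟨∂N/∂s(s,t₀), ℓ(s)⟩ = 0 holds iff ∂y/∂t(s,t₀) = 0,
given k₁ ≠ 0, x(s,t₀)=y(s,t₀)=z(s,t₀)=0 and ∂φ₂/∂s (s,t₀) = 0. -/
theorem asymptotic_iff
    (α ℓ n u : ℝ → ℝ × ℝ × ℝ) (k₁ k₂ : ℝ → ℝ) (t₀ : ℝ)
    (x y z xs ys zs xt yt zt : ℝ → ℝ → ℝ)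
    (hα : ∀ s, HasDerivAt α (ℓ s) s)
    (hℓ : ∀ s, HasDerivAt ℓ (k₁ s • u s) s)
    (hn : ∀ s, HasDerivAt n (-(k₂ s) • u s) s)
    (hu : ∀ s, HasDerivAt u (-(k₂ s) • ℓ s + k₁ s • n s) s)
    (hframe : ∀ s, lz (ℓ s) (ℓ s) = 0 ∧ lz (n s) (n s) = 0 ∧ lz (u s) (u s) = 1 ∧
      lz (ℓ s) (n s) = -1 ∧ lz (ℓ s) (u s) = 0 ∧ lz (n s) (u s) = 0)
    (hcross : ∀ s, cx (ℓ s) (n s) = u s ∧ cx (n s) (u s) = -n s ∧ cx (ℓ s) (u s) = ℓ s)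
    (hk₁ : ∀ s, k₁ s ≠ 0)
    (hxs : ∀ s t, HasDerivAt (fun s' => x s' t) (xs s t) s)
    (hys : ∀ s t, HasDerivAt (fun s' => y s' t) (ys s t) s)
    (hzs : ∀ s t, HasDerivAt (fun s' => z s' t) (zs s t) s)
    (hxt : ∀ s t, HasDerivAt (fun t' => x s t') (xt s t) t)
    (hyt : ∀ s t, HasDerivAt (fun t' => y s t') (yt s t) t)
    (hzt : ∀ s t, HasDerivAt (fun t' => z s t') (zt s t) t)
    (hvanish : ∀ s, x s t₀ = 0 ∧ y s t₀ = 0 ∧ z s t₀ = 0)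
    (hφ₂s : ∀ s, HasDerivAt (fun s' => zs s' t₀ * yt s' t₀ - ys s' t₀ * zt s' t₀) 0 s)
    (φ : ℝ → ℝ → ℝ × ℝ × ℝ)
    (hφ : ∀ s t, φ s t = α s + x s t • ℓ s + y s t • n s + z s t • u s)
    (N : ℝ → ℝ → ℝ × ℝ × ℝ)
    (hN : ∀ s t, N s t = cx (deriv (fun s' => φ s' t) s) (deriv (fun t' => φ s t') t))
    (dN : ℝ → ℝ × ℝ × ℝ)
    (hdN : ∀ s, HasDerivAt (fun s' => N s' t₀) (dN s) s) :
    (∀ s, lz (dN s) (ℓ s) = 0) ↔ (∀ s, yt s t₀ = 0) := by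
  -- marching-scale s-derivatives vanish at t₀
  have hx0 : ∀ s, xs s t₀ = 0 := fun s => (hxs s t₀).unique (by
    have hfun : (fun s' => x s' t₀) = fun _ => (0 : ℝ) := funext fun s' => (hvanish s').1
    rw [hfun]; exact hasDerivAt_const s 0)
  have hy0 : ∀ s, ys s t₀ = 0 := fun s => (hys s t₀).unique (by
    have hfun : (fun s' => y s' t₀) = fun _ => (0 : ℝ) := funext fun s' => (hvanish s').2.1
    rw [hfun]; exact hasDerivAt_const s 0)
  have hz0 : ∀ s, zs s t₀ = 0 := fun s => (hzs s t₀).unique (by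
    have hfun : (fun s' => z s' t₀) = fun _ => (0 : ℝ) := funext fun s' => (hvanish s').2.2
    rw [hfun]; exact hasDerivAt_const s 0)
  -- ∂φ/∂s at t₀ equals ℓ
  have hφs : ∀ s, HasDerivAt (fun s' => φ s' t₀) (ℓ s) s := by
    intro s
    have hfun : (fun s' => φ s' t₀)
        = fun s' => α s' + x s' t₀ • ℓ s' + y s' t₀ • n s' + z s' t₀ • u s' :=
      funext fun s' => hφ s' t₀
    rw [hfun]
    have h1 : HasDerivAt (fun s' => x s' t₀ • ℓ s') (0 : ℝ × ℝ × ℝ) s := by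
      have h := (hxs s t₀).smul (hℓ s)
      simp only [hx0 s, (hvanish s).1, zero_smul, add_zero] at h
      exact h
    have h2 : HasDerivAt (fun s' => y s' t₀ • n s') (0 : ℝ × ℝ × ℝ) s := by
      have h := (hys s t₀).smul (hn s)
      simp only [hy0 s, (hvanish s).2.1, zero_smul, add_zero] at h
      exact h
    have h3 : HasDerivAt (fun s' => z s' t₀ • u s') (0 : ℝ × ℝ × ℝ) s := by
      have h := (hzs s t₀).smul (hu s)
      simp only [hz0 s, (hvanish s).2.2, zero_smul, add_zero] at h
      exact h
    have h := (((hα s).add h1).add h2).add h3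
    simp only [add_zero] at h
    exact h
  -- ∂φ/∂t at t₀
  have hφt : ∀ s, HasDerivAt (fun t' => φ s t')
      (xt s t₀ • ℓ s + yt s t₀ • n s + zt s t₀ • u s) t₀ := by
    intro s
    have hfun : (fun t' => φ s t')
        = fun t' => α s + x s t' • ℓ s + y s t' • n s + z s t' • u s :=
      funext fun t' => hφ s t'
    rw [hfun]
    have h := (((hasDerivAt_const t₀ (α s)).add ((hxt s t₀).smul_const (ℓ s))).add
      ((hyt s t₀).smul_const (n s))).add ((hzt s t₀).smul_const (u s))
    simp only [zero_add] at h
    exact h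
  -- value of N on t = t₀
  have hNval : ∀ s, N s t₀ = yt s t₀ • u s + zt s t₀ • ℓ s := by
    intro s
    rw [hN s t₀, (hφs s).deriv, (hφt s).deriv,
      cx_expand (ℓ s) (n s) (u s) (xt s t₀) (yt s t₀) (zt s t₀),
      (hcross s).1, (hcross s).2.2]
  -- ⟨N(s,t₀), ℓ(s)⟩ ≡ 0
  have hg0 : ∀ s', lz (N s' t₀) (ℓ s') = 0 := by
    intro s'
    obtain ⟨h1, _, _, _, h5, _⟩ := hframe s'
    have hcomm : lz (u s') (ℓ s') = lz (ℓ s') (u s') := by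
      simp [lz]; ring
    rw [hNval s', lz_smul_add, hcomm, h1, h5]; ring
  -- ⟨N(s,t₀), u(s)⟩ = yt
  have hlzNu : ∀ s, lz (N s t₀) (u s) = yt s t₀ := by
    intro s
    obtain ⟨_, _, h3, _, h5, _⟩ := hframe s
    rw [hNval s, lz_smul_add, h3, h5]; ring
  -- differentiate ⟨N(·,t₀), ℓ⟩ ≡ 0
  have key : ∀ s, lz (dN s) (ℓ s) = -(k₁ s * yt s t₀) := by
    intro s
    have hN1 := hasDerivAt_fst' (hdN s)
    have hN2 := hasDerivAt_fst' (hasDerivAt_snd' (hdN s))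
    have hN3 := hasDerivAt_snd' (hasDerivAt_snd' (hdN s))
    have hl1 := hasDerivAt_fst' (hℓ s)
    have hl2 := hasDerivAt_fst' (hasDerivAt_snd' (hℓ s))
    have hl3 := hasDerivAt_snd' (hasDerivAt_snd' (hℓ s))
    have hgd : HasDerivAt (fun s' => lz (N s' t₀) (ℓ s'))
        (lz (dN s) (ℓ s) + lz (N s t₀) (k₁ s • u s)) s := by
      have hd := (((hN1.mul hl1).neg).add (hN2.mul hl2)).add (hN3.mul hl3)
      have hfun : (fun s' => lz (N s' t₀) (ℓ s'))
          = fun x => -((N x t₀).1 * (ℓ x).1) + (N x t₀).2.1 * (ℓ x).2.1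
              + (N x t₀).2.2 * (ℓ x).2.2 := rfl
      rw [hfun]
      refine HasDerivAt.congr_deriv hd ?_
      simp [lz, Prod.smul_fst, Prod.smul_snd, smul_eq_mul]; ring
    have hgz : HasDerivAt (fun s' => lz (N s' t₀) (ℓ s')) 0 s := by
      have hfun : (fun s' => lz (N s' t₀) (ℓ s')) = fun _ => (0 : ℝ) := funext hg0
      rw [hfun]; exact hasDerivAt_const s 0
    have heq := hgd.unique hgz
    rw [lz_smul_right, hlzNu s] at heq
    linarith
  constructor
  · intro h s
    have hs := key s
    rw [h s] at hs
    have : k₁ s * yt s t₀ = 0 := by linarith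
    exact (mul_eq_zero.mp this).resolve_left (hk₁ s)
  · intro h s
    rw [key s, h s]; ring
end
end
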